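/- arXiv:2001.11459 — 5 statements merged into one kernel-verified Lean document; each statement's English description precedes it below -/
import Mathlib

section
/- Let (X_{it}) be i.i.d. symmetric random variables and let k ≥ 2. If I = (i_1,…,i_k) ∈ {1,…,p}^k satisfies i_j = i_{j+1} for some 1 ≤ j ≤ k (with the cyclic convention i_{k+1} := i_1), then F(i_1,…,i_k) = F(i_1,…,i_{j−1}, i_{j+1},…,i_k), i.e. erasing one element of a run does not change the value of F. -/
open MeasureTheory ProbabilityTheory Filter

noncomputable section

variable {Ω : Type*}

/-- The self-normalized entries `Y_{it} = X_{it} / sqrt(D_i)` with `D_i = ∑_{t<n} X_{it}²`. -/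
def Ymat (X : ℕ → ℕ → Ω → ℝ) (n i t : ℕ) (ω : Ω) : ℝ :=
  X i t ω / Real.sqrt (∑ s ∈ Finset.range n, (X i s ω) ^ 2)

/-- `f(I,T) = E[∏_j Y_{i_j t_{j-1}} Y_{i_j t_j}]`, with the cyclic convention `t_0 = t_k`. -/
def fpath [MeasurableSpace Ω] (X : ℕ → ℕ → Ω → ℝ) (P : Measure Ω) (n : ℕ) {k : ℕ}
    (I T : Fin k → ℕ) : ℝ :=
  ∫ ω, ∏ j : Fin k, (Ymat X n (I j) (T ((finRotate k).symm j)) ω * Ymat X n (I j) (T j) ω) ∂P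

/-- `F(I) = ∑_{t_1,…,t_k < n} f(I,T)`, with the convention `F(∅) = n`. -/
def Fpath [MeasurableSpace Ω] (X : ℕ → ℕ → Ω → ℝ) (P : Measure Ω) (n : ℕ) {k : ℕ}
    (I : Fin k → ℕ) : ℝ :=
  if k = 0 then n else ∑ T : Fin k → Fin n, fpath X P n I fun j => (T j : ℕ)

/-!
Summing over the time indices factorizes the integrand of `F(I)` pointwise:
`∑_T ∏_l Y_{i_l t_{l-1}} Y_{i_l t_l} = ∏_l ⟨Y_{i_l}, Y_{i_{l+1}}⟩`, a cyclic product of entries of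
the Gram matrix of the rows of `Y`. Each row `Y_i` is a unit vector or zero, so a loop
`⟨Y_i, Y_i⟩` may be dropped from the cycle: it equals `1`, unless `Y_i = 0`, in which case the
neighbouring factor `⟨Y_{i_{j-1}}, Y_i⟩` vanishes as well.
-/

namespace Fin

theorem succAbove_add_one_eq_or {k : ℕ} (j : Fin (k + 2)) (l : Fin (k + 1)) :
    j.succAbove (l + 1) = j.succAbove l + 1 ∨
      (j.succAbove l + 1 = j ∧ j.succAbove (l + 1) = j + 1) := by
  have hl := l.isLt
  have hj := j.isLt
  simp only [Fin.ext_iff, Fin.val_add_one, succAbove, lt_def, val_castSucc, apply_ite Fin.val,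
    val_succ, val_last]
  split_ifs <;> omega

/-- The loop factor `g (I j) (I j)` of the run is absorbed by the incoming edge
`g (I (j - 1)) (I j)`. -/
theorem prod_cycle_erase_run {α M : Type*} [CommMonoid M] (g : α → α → M)
    (hg : ∀ a b, g a a * g b a = g b a) {k : ℕ} (I : Fin (k + 2) → α) (j : Fin (k + 2))
    (hrun : I j = I (j + 1)) :
    ∏ l, g (I l) (I (l + 1)) =
      ∏ l : Fin (k + 1), g (I (j.succAbove l)) (I (j.succAbove (l + 1))) := by
  have hshift : ∀ l : Fin (k + 1), I (j.succAbove (l + 1)) = I (j.succAbove l + 1) := by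
    intro l
    rcases succAbove_add_one_eq_or j l with h | ⟨hin, hout⟩
    · rw [h]
    · rw [hout, hin, ← hrun]
  obtain ⟨l₀, hl₀⟩ : ∃ l₀, j.succAbove l₀ = j - 1 :=
    exists_succAbove_eq (by simp [sub_eq_self])
  simp_rw [hshift]
  rw [prod_univ_succAbove _ j, ← Finset.mul_prod_erase _ _ (Finset.mem_univ l₀), ← mul_assoc,
    hl₀, sub_add_cancel, ← hrun, hg]

end Fin

theorem sum_prod_rotate_eq_prod_sum {R β : Type*} [CommSemiring R] [Fintype β] {k : ℕ}
    (v : Fin k → β → R) :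
    ∑ T : Fin k → β, ∏ l, v l (T ((finRotate k).symm l)) * v l (T l) =
      ∏ l, ∑ t, v l t * v (finRotate k l) t := by
  classical
  rw [Finset.prod_univ_sum, Fintype.piFinset_univ]
  refine Finset.sum_congr rfl fun T _ => ?_
  rw [Finset.prod_mul_distrib, Finset.prod_mul_distrib, mul_comm,
    ← Equiv.prod_comp (finRotate k) (fun l => v l (T ((finRotate k).symm l)))]
  simp only [Equiv.symm_apply_apply]

section Ymat

variable (X : ℕ → ℕ → Ω → ℝ) (n : ℕ)

def Ygram (ω : Ω) (a b : ℕ) : ℝ :=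
  ∑ t : Fin n, Ymat X n a t ω * Ymat X n b t ω

theorem abs_Ymat_le_one {i t : ℕ} (ht : t < n) (ω : Ω) : |Ymat X n i t ω| ≤ 1 := by
  have hsq : X i t ω ^ 2 ≤ ∑ s ∈ Finset.range n, X i s ω ^ 2 :=
    Finset.single_le_sum (f := fun s => X i s ω ^ 2) (fun _ _ => sq_nonneg _)
      (Finset.mem_range.mpr ht)
  rw [Ymat, abs_div, abs_of_nonneg (Real.sqrt_nonneg _)]
  exact div_le_one_of_le₀ (Real.abs_le_sqrt hsq) (Real.sqrt_nonneg _)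

theorem Ygram_self {a : ℕ} (ω : Ω) (hD : ∑ s ∈ Finset.range n, X a s ω ^ 2 ≠ 0) :
    Ygram X n ω a a = 1 := by
  have hD0 : 0 ≤ ∑ s ∈ Finset.range n, X a s ω ^ 2 := Finset.sum_nonneg fun _ _ => sq_nonneg _
  have hterm : ∀ t : Fin n,
      Ymat X n a t ω * Ymat X n a t ω = X a t ω ^ 2 / ∑ s ∈ Finset.range n, X a s ω ^ 2 :=
    fun t => by rw [Ymat, div_mul_div_comm, Real.mul_self_sqrt hD0, sq]
  rw [Ygram, Finset.sum_congr rfl fun t _ => hterm t, ← Finset.sum_div,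
    Fin.sum_univ_eq_sum_range (fun s => X a s ω ^ 2), div_self hD]

/-- A row of `Y` is either zero (when `D_a = 0`, by the junk value `x / 0 = 0`) or a unit vector. -/
theorem Ygram_self_mul (ω : Ω) (a b : ℕ) :
    Ygram X n ω a a * Ygram X n ω b a = Ygram X n ω b a := by
  by_cases hD : ∑ s ∈ Finset.range n, X a s ω ^ 2 = 0
  · have hzero : ∀ t, Ymat X n a t ω = 0 := fun t => by simp [Ymat, hD]
    simp [Ygram, hzero]
  · rw [Ygram_self X n ω hD, one_mul]

variable [MeasurableSpace Ω]

theorem measurable_Ymat (hmeas : ∀ i t, Measurable (X i t)) (i t : ℕ) :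
    Measurable (Ymat X n i t) :=
  (hmeas i t).div (Finset.measurable_sum _ fun s _ => (hmeas i s).pow_const 2).sqrt

theorem integrable_prod_Ymat_mul (P : Measure Ω) [IsFiniteMeasure P]
    (hmeas : ∀ i t, Measurable (X i t)) {ι : Type*} [Fintype ι] (I : ι → ℕ) (S T : ι → Fin n) :
    Integrable (fun ω => ∏ l, Ymat X n (I l) (S l) ω * Ymat X n (I l) (T l) ω) P := by
  refine .of_bound (Finset.measurable_prod _ fun l _ =>
    (measurable_Ymat X n hmeas _ _).mul (measurable_Ymat X n hmeas _ _)).aestronglyMeasurable 1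
    (ae_of_all _ fun ω => ?_)
  rw [Real.norm_eq_abs, Finset.abs_prod]
  refine Finset.prod_le_one (fun _ _ => abs_nonneg _) fun l _ => ?_
  rw [abs_mul]
  exact mul_le_one₀ (abs_Ymat_le_one X n (S l).isLt ω) (abs_nonneg _)
    (abs_Ymat_le_one X n (T l).isLt ω)

theorem sum_fpath_eq_integral_prod_Ygram (P : Measure Ω) [IsFiniteMeasure P]
    (hmeas : ∀ i t, Measurable (X i t)) {k : ℕ} (I : Fin k → ℕ) :
    ∑ T : Fin k → Fin n, fpath X P n I (fun l => T l) =
      ∫ ω, ∏ l, Ygram X n ω (I l) (I (finRotate k l)) ∂P := by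
  unfold fpath
  rw [← integral_finsetSum _ fun T _ =>
    integrable_prod_Ymat_mul X n P hmeas I (fun l => T ((finRotate k).symm l)) T]
  congr 1 with ω
  exact sum_prod_rotate_eq_prod_sum fun l (t : Fin n) => Ymat X n (I l) t ω

end Ymat

theorem Fpath_erase_run_general
    [MeasurableSpace Ω] (P : Measure Ω) [IsProbabilityMeasure P]
    (X : ℕ → ℕ → Ω → ℝ)
    (hmeas : ∀ i t, Measurable (X i t))
    (n m : ℕ) (hm : 1 ≤ m)
    (I : Fin (m + 1) → ℕ)
    (j : Fin (m + 1)) (hrun : I j = I (j + 1)) :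
    Fpath X P n I = Fpath X P n (I ∘ j.succAbove) := by
  obtain ⟨k, rfl⟩ : ∃ k, m = k + 1 := ⟨m - 1, by omega⟩
  simp only [Fpath, Nat.add_one_ne_zero, if_false, sum_fpath_eq_integral_prod_Ygram X n P hmeas]
  congr 1 with ω
  simp only [finRotate_apply, Function.comp_apply]
  exact Fin.prod_cycle_erase_run _ (Ygram_self_mul X n ω) I j hrun

theorem Fpath_erase_run
    [MeasurableSpace Ω] (P : Measure Ω) [IsProbabilityMeasure P]
    (X : ℕ → ℕ → Ω → ℝ)
    (hmeas : ∀ i t, Measurable (X i t))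
    (hindep : iIndepFun
      (fun it : ℕ × ℕ => X it.1 it.2) P)
    (hident : ∀ i t, IdentDistrib (X i t) (X 0 0) P P)
    (hnondeg : ¬ ∃ c : ℝ, ∀ᵐ ω ∂P, X 0 0 ω = c)
    (hsymm : IdentDistrib (X 0 0) (fun ω => -X 0 0 ω) P P)
    (n p m : ℕ) (hm : 1 ≤ m)
    (I : Fin (m + 1) → ℕ) (hIp : ∀ l, I l < p)
    (j : Fin (m + 1)) (hrun : I j = I (j + 1)) :
    Fpath X P n I = Fpath X P n (I ∘ j.succAbove) :=
  Fpath_erase_run_general P X hmeas n m hm I j hrun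

end
end

section
/- For each n let B_n = (B_{jk}) be a non-random n×n real matrix with sup_n ‖B_n‖₂ < ∞ (‖·‖₂ the spectral norm), and let S_n = {(i₁,j₁,i₂,j₂) : 1 ≤ i₁,j₁,i₂,j₂ ≤ n} \ {(i₁,j₁,i₂,j₂) : (i₁ = i₂ and j₁ = j₂) or (i₁ = j₂ ≠ i₂ = j₁)}. Assume E[Y₁⁴] = o(n^{-1}), n·Var(Y₁Y₂) → 0, and V_n = n² ∑_{(i₁,j₁,i₂,j₂) ∈ S_n} (Cov(Y_{i₁}Y_{j₁}, Y_{i₂}Y_{j₂}))² → 0. Then E[ |∑_{i,j=1}^n B_{ij}(Y_i Y_j − E[Y_i Y_j])|² ] → 0 as n → ∞; that is, E[|Y₀ B_n Y₀' − tr(B_n M_n)|²] = o(1), where Y₀ = (Y₁,…,Y_n) (a row vector) and M_n is the n×n matrix with entries E[Y_i Y_j]. -/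
/-!
Expanding the square, the mean square of the centred quadratic form is
`∑ B_{i₁j₁} B_{i₂j₂} Cov(Y_{i₁}Y_{j₁}, Y_{i₂}Y_{j₂})`. On `S_n` Cauchy–Schwarz bounds the sum
by `‖B‖_F² √V_n ≤ ‖B‖₂² √(n² V_n)`, since `‖B‖_F² ≤ n ‖B‖₂²`. The quadruples outside `S_n`
are of the form `(i, j, i, j)` or `(i, j, j, i)`, so there are only `2n²` of them, and each
covariance is at most the largest variance of a product `Y_i Y_j`. By exchangeability of
`(Y_1, …, Y_n)` that variance is `Var(Y₁Y₂)` or at most `E Y₁⁴`, so this part is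
`O(n ‖B‖₂² (Var(Y₁Y₂) + E Y₁⁴)) = o(1)`.
-/

open MeasureTheory ProbabilityTheory Filter

noncomputable section

variable {Ω : Type*}

/-- The self-normalized variables `Y_t = X_t / sqrt(∑_{s<n} X_s²)`. -/
def Yvec (X : ℕ → Ω → ℝ) (n t : ℕ) (ω : Ω) : ℝ :=
  X t ω / Real.sqrt (∑ s ∈ Finset.range n, (X s ω) ^ 2)

/-- The spectral norm (largest singular value) of a real square matrix. -/
def specNorm {n : ℕ} (M : Matrix (Fin n) (Fin n) ℝ) : ℝ :=
  ‖Matrix.toEuclideanCLM (𝕜 := ℝ) M‖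

namespace ProbabilityTheory

variable {mΩ : MeasurableSpace Ω} {μ : Measure Ω}

lemma abs_covariance_le [IsProbabilityMeasure μ] {X Y : Ω → ℝ} (hX : MemLp X 2 μ)
    (hY : MemLp Y 2 μ) : |cov[X, Y; μ]| ≤ (Var[X; μ] + Var[Y; μ]) / 2 := by
  have hX' : MemLp (fun ω => X ω - μ[X]) 2 μ := hX.sub (memLp_const _)
  have hY' : MemLp (fun ω => Y ω - μ[Y]) 2 μ := hY.sub (memLp_const _)
  rw [variance_eq_integral hX.aemeasurable, variance_eq_integral hY.aemeasurable,
    ← integral_add hX'.integrable_sq hY'.integrable_sq, ← integral_div, covariance]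
  refine (abs_integral_le_integral_abs).trans (integral_mono (hX'.integrable_mul hY').abs
    ((hX'.integrable_sq.add hY'.integrable_sq).div_const _) fun ω => ?_)
  simp only [abs_mul]
  nlinarith [sq_nonneg (|X ω - μ[X]| - |Y ω - μ[Y]|), sq_abs (X ω - μ[X]), sq_abs (Y ω - μ[Y])]

lemma integral_sq_sum_mul_sub_integral [IsProbabilityMeasure μ] {ι : Type*} [Fintype ι]
    {Z : ι → Ω → ℝ} (hZ : ∀ i, MemLp (Z i) 2 μ) (b : ι → ℝ) :
    ∫ ω, (∑ i, b i * (Z i ω - μ[Z i])) ^ 2 ∂μ = ∑ i, ∑ j, b i * b j * cov[Z i, Z j; μ] := by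
  have hZ' : ∀ i, MemLp (fun ω => Z i ω - μ[Z i]) 2 μ := fun i => (hZ i).sub (memLp_const _)
  have hint : ∀ i j, Integrable
      (fun ω => b i * (Z i ω - μ[Z i]) * (b j * (Z j ω - μ[Z j]))) μ := fun i j =>
    ((hZ' i).const_mul (b i)).integrable_mul ((hZ' j).const_mul (b j))
  simp_rw [sq, Finset.sum_mul_sum]
  rw [integral_finsetSum _ fun i _ => integrable_finsetSum _ fun j _ => hint i j]
  refine Finset.sum_congr rfl fun i _ => ?_
  rw [integral_finsetSum _ fun j _ => hint i j]
  refine Finset.sum_congr rfl fun j _ => ?_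
  rw [covariance, ← integral_const_mul]
  congr 1 with ω
  ring

lemma iIndepFun.identDistrib_pi_comp {ι κ β : Type*} [Countable κ] [MeasurableSpace β]
    {X : ι → Ω → β} (hindep : iIndepFun X μ) (hident : ∀ i j, IdentDistrib (X i) (X j) μ μ)
    {f g : κ → ι} (hf : f.Injective) (hg : g.Injective) :
    IdentDistrib (fun ω k => X (f k) ω) (fun ω k => X (g k) ω) μ μ :=
  IdentDistrib.pi (fun k => hident (f k) (g k)) (hindep.precomp hf) (hindep.precomp hg)

end ProbabilityTheory

section SelfNormalized

variable {mΩ : MeasurableSpace Ω} {P : Measure Ω} {X : ℕ → Ω → ℝ}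

lemma aemeasurable_Yvec (hX : ∀ t, AEMeasurable (X t) P) (n t : ℕ) :
    AEMeasurable (Yvec X n t) P :=
  (hX t).div (Finset.aemeasurable_fun_sum _ fun s _ => (hX s).pow_const 2).sqrt

lemma abs_Yvec_le_one {n t : ℕ} (ht : t < n) (ω : Ω) : |Yvec X n t ω| ≤ 1 := by
  have hle : X t ω ^ 2 ≤ ∑ s ∈ Finset.range n, X s ω ^ 2 :=
    Finset.single_le_sum (f := fun s => X s ω ^ 2) (fun s _ => sq_nonneg _)
      (Finset.mem_range.2 ht)
  rw [Yvec, abs_div, abs_of_nonneg (Real.sqrt_nonneg _)]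
  exact div_le_one_of_le₀ (Real.abs_le_sqrt hle) (Real.sqrt_nonneg _)

lemma memLp_Yvec_mul [IsFiniteMeasure P] (hX : ∀ t, AEMeasurable (X t) P) {n i j : ℕ}
    (hi : i < n) (hj : j < n) : MemLp (fun ω => Yvec X n i ω * Yvec X n j ω) 2 P := by
  refine MemLp.of_bound
    ((aemeasurable_Yvec hX n i).mul (aemeasurable_Yvec hX n j)).aestronglyMeasurable 1
    (ae_of_all _ fun ω => ?_)
  rw [Real.norm_eq_abs, abs_mul]
  exact mul_le_one₀ (abs_Yvec_le_one hi ω) (abs_nonneg _) (abs_Yvec_le_one hj ω)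

lemma Yvec_eq_div_sqrt_sum_fin (n t : ℕ) (ω : Ω) :
    Yvec X n t ω = X t ω / √(∑ s : Fin n, X s ω ^ 2) := by
  rw [Yvec, Fin.sum_univ_eq_sum_range (fun s => X s ω ^ 2)]

lemma identDistrib_Yvec_perm (hindep : iIndepFun X P)
    (hident : ∀ t, IdentDistrib (X t) (X 0) P P) {n : ℕ} (σ : Equiv.Perm (Fin n)) :
    IdentDistrib (fun ω (t : Fin n) => Yvec X n (σ t) ω) (fun ω (t : Fin n) => Yvec X n t ω)
      P P := by
  have hXσ := hindep.identDistrib_pi_comp (fun i j => (hident i).trans (hident j).symm)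
    (Fin.val_injective.comp σ.injective) Fin.val_injective
  have hN : Measurable fun (v : Fin n → ℝ) (t : Fin n) => v t / √(∑ s, v s ^ 2) := by
    fun_prop
  convert hXσ.comp hN using 1 <;> funext ω t
  · simp only [Function.comp_apply, Yvec_eq_div_sqrt_sum_fin,
      Equiv.sum_comp σ fun s => X s ω ^ 2]
  · simp only [Function.comp_apply, Yvec_eq_div_sqrt_sum_fin]

lemma identDistrib_Yvec_mul_perm (hindep : iIndepFun X P)
    (hident : ∀ t, IdentDistrib (X t) (X 0) P P) {n : ℕ} (σ : Equiv.Perm (Fin n))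
    (i j : Fin n) :
    IdentDistrib (fun ω => Yvec X n (σ i) ω * Yvec X n (σ j) ω)
      (fun ω => Yvec X n i ω * Yvec X n j ω) P P :=
  (identDistrib_Yvec_perm hindep hident σ).comp
    ((measurable_pi_apply i).mul (measurable_pi_apply j))

lemma variance_Yvec_mul_le [IsProbabilityMeasure P] (hindep : iIndepFun X P)
    (hident : ∀ t, IdentDistrib (X t) (X 0) P P) {n : ℕ} (i j : Fin n) :
    Var[fun ω => Yvec X n i ω * Yvec X n j ω; P] ≤
      |(∫ ω, (Yvec X n 0 ω * Yvec X n 1 ω) ^ 2 ∂P) - (∫ ω, Yvec X n 0 ω * Yvec X n 1 ω ∂P) ^ 2|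
        + ∫ ω, Yvec X n 0 ω ^ 4 ∂P := by
  have hX t := (hident t).aemeasurable_fst
  have hfourth : 0 ≤ ∫ ω, Yvec X n 0 ω ^ 4 ∂P := integral_nonneg fun ω => by positivity
  rcases eq_or_ne i j with rfl | hij
  · let a : Fin n := ⟨0, i.pos⟩
    have h := identDistrib_Yvec_mul_perm hindep hident (Equiv.swap a i) a a
    rw [Equiv.swap_apply_left] at h
    calc Var[fun ω => Yvec X n i ω * Yvec X n i ω; P]
        ≤ ∫ ω, (Yvec X n i ω * Yvec X n i ω) ^ 2 ∂P :=
          variance_le_expectation_sq h.aemeasurable_fst.aestronglyMeasurable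
      _ = ∫ ω, (Yvec X n a ω * Yvec X n a ω) ^ 2 ∂P :=
          (h.comp (measurable_id.pow_const 2)).integral_eq
      _ = ∫ ω, Yvec X n 0 ω ^ 4 ∂P := by
          congr 1 with ω
          ring
      _ ≤ _ := le_add_of_nonneg_left (abs_nonneg _)
  · have hn : 1 < n := by
      by_contra! h
      exact hij (Fin.ext (by omega))
    let a : Fin n := ⟨0, by omega⟩
    let b : Fin n := ⟨1, hn⟩
    obtain ⟨σ, hσ⟩ := Equiv.Perm.exists_extending_pair ![a, b] ![i, j]
      (by intro x y; fin_cases x <;> fin_cases y <;> simp [a, b])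
      (by intro x y; fin_cases x <;> fin_cases y <;> simp [hij, hij.symm])
    have h := identDistrib_Yvec_mul_perm hindep hident σ a b
    rw [show σ a = i from hσ 0, show σ b = j from hσ 1] at h
    rw [h.variance_eq, variance_eq_sub (memLp_Yvec_mul hX (Nat.zero_lt_of_lt hn) hn)]
    exact (le_abs_self _).trans (le_add_of_nonneg_right hfourth)

end SelfNormalized

section Quadruples

variable {ι : Type*} [Fintype ι] [DecidableEq ι]

variable (ι) in
/-- The index set `S_n` of the paper, for `ι = Fin n`. -/
def genericIndices : Finset (ι × ι × ι × ι) :=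
  Finset.univ.filter fun idx => ¬ ((idx.1 = idx.2.2.1 ∧ idx.2.1 = idx.2.2.2) ∨
    (idx.1 = idx.2.2.2 ∧ idx.2.1 = idx.2.2.1 ∧ idx.1 ≠ idx.2.2.1))

omit [DecidableEq ι] in
lemma sum_sum_sq_mul_sum_sum_sq (b : ι → ι → ℝ) :
    ∑ idx : ι × ι × ι × ι, (b idx.1 idx.2.1 * b idx.2.2.1 idx.2.2.2) ^ 2 =
      (∑ i, ∑ j, b i j ^ 2) ^ 2 := by
  rw [sq, Finset.sum_mul_sum]
  simp only [Fintype.sum_prod_type, mul_pow, Finset.sum_mul_sum]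
  exact Finset.sum_congr rfl fun _ _ => Finset.sum_comm

omit [DecidableEq ι] in
lemma sum_mul_mul_le_sum_sq_mul_sqrt (b : ι → ι → ℝ) (c : ι × ι × ι × ι → ℝ)
    (s : Finset (ι × ι × ι × ι)) :
    ∑ idx ∈ s, b idx.1 idx.2.1 * b idx.2.2.1 idx.2.2.2 * c idx ≤
      (∑ i, ∑ j, b i j ^ 2) * √(∑ idx ∈ s, c idx ^ 2) := by
  refine (Real.sum_mul_le_sqrt_mul_sqrt s _ c).trans
    (mul_le_mul_of_nonneg_right ?_ (Real.sqrt_nonneg _))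
  calc √(∑ idx ∈ s, (b idx.1 idx.2.1 * b idx.2.2.1 idx.2.2.2) ^ 2)
      ≤ √(∑ idx : ι × ι × ι × ι, (b idx.1 idx.2.1 * b idx.2.2.1 idx.2.2.2) ^ 2) :=
        Real.sqrt_le_sqrt (Finset.sum_le_sum_of_subset_of_nonneg s.subset_univ
          fun _ _ _ => sq_nonneg _)
    _ = ∑ i, ∑ j, b i j ^ 2 := by
        rw [sum_sum_sq_mul_sum_sum_sq, Real.sqrt_sq (by positivity)]

lemma sum_compl_genericIndices_le (g : ι × ι × ι × ι → ℝ)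
    (hg : ∀ idx, 0 ≤ g idx) :
    ∑ idx ∈ (genericIndices ι)ᶜ, g idx ≤
      ∑ i, ∑ j, (g (i, j, i, j) + g (i, j, j, i)) := by
  calc ∑ idx ∈ (genericIndices ι)ᶜ, g idx
      ≤ ∑ idx ∈ (genericIndices ι)ᶜ, ((if idx.2.2 = (idx.1, idx.2.1) then g idx else 0) +
          (if idx.2.2 = (idx.2.1, idx.1) then g idx else 0)) := by
        refine Finset.sum_le_sum fun idx hidx => ?_
        obtain ⟨i, j, k, l⟩ := idx
        simp only [genericIndices, Finset.compl_filter, not_not, Finset.mem_filter,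
          Finset.mem_univ, true_and] at hidx
        rcases hidx with ⟨rfl, rfl⟩ | ⟨rfl, rfl, -⟩
        · rw [if_pos rfl]
          exact le_add_of_nonneg_right (ite_nonneg (hg _) le_rfl)
        · rw [if_pos (rfl : (j, i) = (j, i))]
          exact le_add_of_nonneg_left (ite_nonneg (hg _) le_rfl)
    _ ≤ ∑ idx : ι × ι × ι × ι, ((if idx.2.2 = (idx.1, idx.2.1) then g idx else 0) +
          (if idx.2.2 = (idx.2.1, idx.1) then g idx else 0)) :=
        Finset.sum_le_sum_of_subset_of_nonneg (Finset.subset_univ _) fun idx _ _ =>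
          add_nonneg (ite_nonneg (hg idx) le_rfl) (ite_nonneg (hg idx) le_rfl)
    _ = ∑ i, ∑ j, (g (i, j, i, j) + g (i, j, j, i)) := by
        simp only [Fintype.sum_prod_type, Finset.sum_add_distrib, Finset.sum_ite_eq',
          Finset.mem_univ, if_true]

lemma sum_mul_mul_le_of_abs_le (b : ι → ι → ℝ) (c : ι × ι × ι × ι → ℝ) {K : ℝ}
    (hc : ∀ idx, |c idx| ≤ K) :
    ∑ idx, b idx.1 idx.2.1 * b idx.2.2.1 idx.2.2.2 * c idx ≤
      (∑ i, ∑ j, b i j ^ 2) * (2 * K + √(∑ idx ∈ genericIndices ι, c idx ^ 2)) := by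
  rcases isEmpty_or_nonempty ι with hι | ⟨⟨i₀⟩⟩
  · simp
  have hK : 0 ≤ K := (abs_nonneg _).trans (hc (i₀, i₀, i₀, i₀))
  have hdegenerate :
      ∑ idx ∈ (genericIndices ι)ᶜ, b idx.1 idx.2.1 * b idx.2.2.1 idx.2.2.2 * c idx ≤
        2 * K * ∑ i, ∑ j, b i j ^ 2 := by
    calc ∑ idx ∈ (genericIndices ι)ᶜ, b idx.1 idx.2.1 * b idx.2.2.1 idx.2.2.2 * c idx
        ≤ ∑ idx ∈ (genericIndices ι)ᶜ, |b idx.1 idx.2.1| * |b idx.2.2.1 idx.2.2.2| * K :=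
          Finset.sum_le_sum fun idx _ => by
            rw [← abs_mul]
            exact (le_abs_self _).trans (by rw [abs_mul]; gcongr; exact hc idx)
      _ ≤ ∑ i, ∑ j, (|b i j| * |b i j| * K + |b i j| * |b j i| * K) :=
          sum_compl_genericIndices_le _ fun idx => by positivity
      _ ≤ ∑ i, ∑ j, K * (3 / 2 * b i j ^ 2 + 1 / 2 * b j i ^ 2) :=
          Finset.sum_le_sum fun i _ => Finset.sum_le_sum fun j _ => by
            nlinarith [two_mul_le_add_sq |b i j| |b j i|, sq_abs (b i j), sq_abs (b j i)]
      _ = 2 * K * ∑ i, ∑ j, b i j ^ 2 := by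
          have hswap : ∑ i, ∑ j, b j i ^ 2 = ∑ i, ∑ j, b i j ^ 2 := Finset.sum_comm
          simp only [← Finset.mul_sum, Finset.sum_add_distrib, hswap]
          ring
  rw [← Finset.sum_add_sum_compl (genericIndices ι)]
  linarith [sum_mul_mul_le_sum_sq_mul_sqrt b c (genericIndices ι)]

end Quadruples

lemma sum_sum_sq_le_card_mul_specNorm_sq {n : ℕ} (M : Matrix (Fin n) (Fin n) ℝ) :
    ∑ i, ∑ j, M i j ^ 2 ≤ n * specNorm M ^ 2 := by
  have hcol : ∀ j, ∑ i, M i j ^ 2 ≤ specNorm M ^ 2 := fun j => by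
    let e : EuclideanSpace ℝ (Fin n) := WithLp.toLp 2 (Pi.single j 1)
    have hMe : ‖Matrix.toEuclideanCLM (𝕜 := ℝ) M e‖ ≤ specNorm M := by
      simpa [e, specNorm] using (Matrix.toEuclideanCLM (𝕜 := ℝ) M).le_opNorm e
    have hsq : ‖Matrix.toEuclideanCLM (𝕜 := ℝ) M e‖ ^ 2 = ∑ i, M i j ^ 2 := by
      simp [e, EuclideanSpace.norm_sq_eq, Matrix.mulVec_single]
    rw [← hsq]
    exact pow_le_pow_left₀ (norm_nonneg _) hMe 2
  calc ∑ i, ∑ j, M i j ^ 2 = ∑ j, ∑ i, M i j ^ 2 := Finset.sum_comm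
    _ ≤ ∑ _j : Fin n, specNorm M ^ 2 := Finset.sum_le_sum fun j _ => hcol j
    _ = n * specNorm M ^ 2 := by simp

lemma integral_sq_quadratic_form_le {mΩ : MeasurableSpace Ω} {P : Measure Ω}
    [IsProbabilityMeasure P] {X : ℕ → Ω → ℝ} (hindep : iIndepFun X P)
    (hident : ∀ t, IdentDistrib (X t) (X 0) P P) {n : ℕ} (M : Matrix (Fin n) (Fin n) ℝ) :
    ∫ ω, (∑ i : Fin n, ∑ j : Fin n, M i j *
        (Yvec X n i ω * Yvec X n j ω - ∫ ω', Yvec X n i ω' * Yvec X n j ω' ∂P)) ^ 2 ∂P ≤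
      specNorm M ^ 2 * (2 * (n * |(∫ ω, (Yvec X n 0 ω * Yvec X n 1 ω) ^ 2 ∂P) -
          (∫ ω, Yvec X n 0 ω * Yvec X n 1 ω ∂P) ^ 2| + n * ∫ ω, Yvec X n 0 ω ^ 4 ∂P) +
        √(n ^ 2 * ∑ idx ∈ genericIndices (Fin n),
          ((∫ ω, Yvec X n idx.1 ω * Yvec X n idx.2.1 ω *
              (Yvec X n idx.2.2.1 ω * Yvec X n idx.2.2.2 ω) ∂P) -
            (∫ ω, Yvec X n idx.1 ω * Yvec X n idx.2.1 ω ∂P) *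
              (∫ ω, Yvec X n idx.2.2.1 ω * Yvec X n idx.2.2.2 ω ∂P)) ^ 2)) := by
  set K := |(∫ ω, (Yvec X n 0 ω * Yvec X n 1 ω) ^ 2 ∂P) -
      (∫ ω, Yvec X n 0 ω * Yvec X n 1 ω ∂P) ^ 2| + ∫ ω, Yvec X n 0 ω ^ 4 ∂P
  let Z : Fin n × Fin n → Ω → ℝ := fun p ω => Yvec X n p.1 ω * Yvec X n p.2 ω
  have hZ : ∀ p, MemLp (Z p) 2 P := fun p =>
    memLp_Yvec_mul (fun t => (hident t).aemeasurable_fst) p.1.2 p.2.2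
  have hcov : ∀ idx : Fin n × Fin n × Fin n × Fin n,
      |cov[Z (idx.1, idx.2.1), Z (idx.2.2.1, idx.2.2.2); P]| ≤ K := fun idx => by
    have := abs_covariance_le (hZ (idx.1, idx.2.1)) (hZ (idx.2.2.1, idx.2.2.2))
    linarith [variance_Yvec_mul_le hindep hident idx.1 idx.2.1,
      variance_Yvec_mul_le hindep hident idx.2.2.1 idx.2.2.2]
  have hcov_eq : ∀ idx : Fin n × Fin n × Fin n × Fin n,
      cov[Z (idx.1, idx.2.1), Z (idx.2.2.1, idx.2.2.2); P] =
        (∫ ω, Yvec X n idx.1 ω * Yvec X n idx.2.1 ω *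
            (Yvec X n idx.2.2.1 ω * Yvec X n idx.2.2.2 ω) ∂P) -
          (∫ ω, Yvec X n idx.1 ω * Yvec X n idx.2.1 ω ∂P) *
            (∫ ω, Yvec X n idx.2.2.1 ω * Yvec X n idx.2.2.2 ω ∂P) := fun idx =>
    covariance_eq_sub (hZ _) (hZ _)
  calc _ = ∑ idx : Fin n × Fin n × Fin n × Fin n, M idx.1 idx.2.1 * M idx.2.2.1 idx.2.2.2 *
        cov[Z (idx.1, idx.2.1), Z (idx.2.2.1, idx.2.2.2); P] := by
        simpa only [Fintype.sum_prod_type] using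
          integral_sq_sum_mul_sub_integral hZ fun p => M p.1 p.2
    _ ≤ (∑ i, ∑ j, M i j ^ 2) * (2 * K + √(∑ idx ∈ genericIndices (Fin n),
          cov[Z (idx.1, idx.2.1), Z (idx.2.2.1, idx.2.2.2); P] ^ 2)) :=
        sum_mul_mul_le_of_abs_le _ _ hcov
    _ ≤ n * specNorm M ^ 2 * (2 * K + √(∑ idx ∈ genericIndices (Fin n),
          cov[Z (idx.1, idx.2.1), Z (idx.2.2.1, idx.2.2.2); P] ^ 2)) := by
        gcongr
        exact sum_sum_sq_le_card_mul_specNorm_sq M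
    _ = _ := by
        rw [Finset.sum_congr rfl fun idx _ => by rw [hcov_eq idx],
          Real.sqrt_mul' _ (by positivity), Real.sqrt_sq (Nat.cast_nonneg n)]
        ring

theorem quadratic_form_concentration_general
    [MeasurableSpace Ω] (P : Measure Ω) [IsProbabilityMeasure P]
    (X : ℕ → Ω → ℝ)
    (hindep : iIndepFun X P)
    (hident : ∀ t, IdentDistrib (X t) (X 0) P P)
    (B : ∀ n : ℕ, Matrix (Fin n) (Fin n) ℝ)
    (hB : ∃ C : ℝ, ∀ n, specNorm (B n) ≤ C)
    (hY4 : Tendsto (fun n : ℕ => (n : ℝ) * ∫ ω, (Yvec X n 0 ω) ^ 4 ∂P) atTop (nhds 0))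
    (hvar : Tendsto (fun n : ℕ => (n : ℝ) *
        ((∫ ω, (Yvec X n 0 ω * Yvec X n 1 ω) ^ 2 ∂P) -
          (∫ ω, Yvec X n 0 ω * Yvec X n 1 ω ∂P) ^ 2)) atTop (nhds 0))
    (hV : Tendsto (fun n : ℕ => (n : ℝ) ^ 2 *
        ∑ idx ∈ Finset.univ.filter (fun idx : Fin n × Fin n × Fin n × Fin n =>
            ¬ ((idx.1 = idx.2.2.1 ∧ idx.2.1 = idx.2.2.2) ∨
               (idx.1 = idx.2.2.2 ∧ idx.2.1 = idx.2.2.1 ∧ idx.1 ≠ idx.2.2.1))),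
          ((∫ ω, Yvec X n idx.1 ω * Yvec X n idx.2.1 ω *
              (Yvec X n idx.2.2.1 ω * Yvec X n idx.2.2.2 ω) ∂P) -
            (∫ ω, Yvec X n idx.1 ω * Yvec X n idx.2.1 ω ∂P) *
              (∫ ω, Yvec X n idx.2.2.1 ω * Yvec X n idx.2.2.2 ω ∂P)) ^ 2)
        atTop (nhds 0)) :
    Tendsto (fun n : ℕ =>
        ∫ ω, (∑ i : Fin n, ∑ j : Fin n, B n i j *
            (Yvec X n i ω * Yvec X n j ω - ∫ ω', Yvec X n i ω' * Yvec X n j ω' ∂P)) ^ 2 ∂P)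
      atTop (nhds 0) := by
  obtain ⟨C, hC⟩ := hB
  refine squeeze_zero (fun n => integral_nonneg fun ω => sq_nonneg _)
    (fun n => (integral_sq_quadratic_form_le hindep hident (B n)).trans
      (mul_le_mul_of_nonneg_right (pow_le_pow_left₀ (norm_nonneg _) (hC n) 2)
        (by positivity))) ?_
  have hvar' := hvar.abs
  simp only [abs_mul, Nat.abs_cast, abs_zero] at hvar'
  have hlim := (((hvar'.add hY4).const_mul 2).add hV.sqrt).const_mul (C ^ 2)
  simp only [add_zero, mul_zero, Real.sqrt_zero] at hlim
  exact hlim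

theorem quadratic_form_concentration
    [MeasurableSpace Ω] (P : Measure Ω) [IsProbabilityMeasure P]
    (X : ℕ → Ω → ℝ)
    (hmeas : ∀ t, Measurable (X t))
    (hindep : iIndepFun X P)
    (hident : ∀ t, IdentDistrib (X t) (X 0) P P)
    (hnondeg : ¬ ∃ c : ℝ, ∀ᵐ ω ∂P, X 0 ω = c)
    (B : ∀ n : ℕ, Matrix (Fin n) (Fin n) ℝ)
    (hB : ∃ C : ℝ, ∀ n, specNorm (B n) ≤ C)
    (hY4 : Tendsto (fun n : ℕ => (n : ℝ) * ∫ ω, (Yvec X n 0 ω) ^ 4 ∂P) atTop (nhds 0))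
    (hvar : Tendsto (fun n : ℕ => (n : ℝ) *
        ((∫ ω, (Yvec X n 0 ω * Yvec X n 1 ω) ^ 2 ∂P) -
          (∫ ω, Yvec X n 0 ω * Yvec X n 1 ω ∂P) ^ 2)) atTop (nhds 0))
    (hV : Tendsto (fun n : ℕ => (n : ℝ) ^ 2 *
        ∑ idx ∈ Finset.univ.filter (fun idx : Fin n × Fin n × Fin n × Fin n =>
            ¬ ((idx.1 = idx.2.2.1 ∧ idx.2.1 = idx.2.2.2) ∨
               (idx.1 = idx.2.2.2 ∧ idx.2.1 = idx.2.2.1 ∧ idx.1 ≠ idx.2.2.1))),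
          ((∫ ω, Yvec X n idx.1 ω * Yvec X n idx.2.1 ω *
              (Yvec X n idx.2.2.1 ω * Yvec X n idx.2.2.2 ω) ∂P) -
            (∫ ω, Yvec X n idx.1 ω * Yvec X n idx.2.1 ω ∂P) *
              (∫ ω, Yvec X n idx.2.2.1 ω * Yvec X n idx.2.2.2 ω ∂P)) ^ 2)
        atTop (nhds 0)) :
    Tendsto (fun n : ℕ =>
        ∫ ω, (∑ i : Fin n, ∑ j : Fin n, B n i j *
            (Yvec X n i ω * Yvec X n j ω - ∫ ω', Yvec X n i ω' * Yvec X n j ω' ∂P)) ^ 2 ∂P)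
      atTop (nhds 0) :=
  quadratic_form_concentration_general P X hindep hident B hB hY4 hvar hV

end
end

section
/- For every positive integer k and every integer j with 1 ≤ j ≤ k, one has −∑_{i=2j−1}^{2k} (−1)^i · binom(2k, i) · binom(i−1, 2j−2) = 1. -/
/-!
From `C(s, t) C(t, r) = C(s, r) C(s - r, t - r)` and the vanishing of alternating row sums,
`∑ₜ (-1)ᵗ C(s, t) C(t, r) = (-1)ʳ [s = r]`. Pascal's rule turns `C(N + 1, t + 1)` into a sum of
these kernels over `s ≤ N`, so `∑ₜ (-1)ᵗ C(N + 1, t + 1) C(t, r) = (-1)ʳ` for `r ≤ N`; shifting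
`i = t + 1` gives `∑ᵢ (-1)ⁱ C(n, i) C(i - 1, m - 1) = (-1)ᵐ`, and `m = 2j - 1` is odd.
-/

open Finset

theorem Int.alternating_sum_range_choose_mul_choose (s r : ℕ) :
    ∑ t ∈ Finset.range (s + 1), (-1 : ℤ) ^ t * s.choose t * t.choose r =
      if s = r then (-1) ^ r else 0 := by
  have below (n t : ℕ) (ht : t < r) : (-1 : ℤ) ^ t * n.choose t * t.choose r = 0 := by
    rw [Nat.choose_eq_zero_of_lt ht, Nat.cast_zero, mul_zero]
  rcases lt_or_ge s r with hsr | hrs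
  · rw [if_neg hsr.ne]
    exact sum_eq_zero fun t ht ↦ below s t (by grind)
  obtain ⟨d, rfl⟩ := Nat.exists_eq_add_of_le hrs
  have factor (u : ℕ) : (-1 : ℤ) ^ (r + u) * (r + d).choose (r + u) * (r + u).choose r =
      (-1) ^ r * (r + d).choose r * ((-1) ^ u * d.choose u) := by
    have h := Nat.choose_mul (n := r + d) (Nat.le_add_right r u)
    rw [Nat.add_sub_cancel_left, Nat.add_sub_cancel_left] at h
    rw [pow_add, mul_assoc, ← Nat.cast_mul, h]
    push_cast
    ring
  rw [add_assoc, sum_range_add, sum_eq_zero fun t ht ↦ below _ t (mem_range.mp ht), zero_add]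
  simp_rw [factor, ← mul_sum, Int.alternating_sum_range_choose]
  rcases d with _ | d <;> simp

theorem Int.alternating_sum_range_choose_succ_mul_choose (N r : ℕ) :
    ∑ t ∈ Finset.range (N + 1), (-1 : ℤ) ^ t * (N + 1).choose (t + 1) * t.choose r =
      if r ≤ N then (-1) ^ r else 0 := by
  induction N with
  | zero => rcases r with _ | r <;> simp
  | succ N ih =>
    have pascal (t : ℕ) : (-1 : ℤ) ^ t * (N + 2).choose (t + 1) * t.choose r =
        (-1) ^ t * (N + 1).choose t * t.choose r +
          (-1) ^ t * (N + 1).choose (t + 1) * t.choose r := by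
      rw [Nat.choose_succ_succ]
      push_cast
      ring
    rw [sum_congr rfl fun t _ ↦ pascal t, sum_add_distrib,
      Int.alternating_sum_range_choose_mul_choose, sum_range_succ _ (N + 1), ih,
      Nat.choose_succ_self, Nat.cast_zero, mul_zero, zero_mul, add_zero]
    grind

theorem Int.alternating_sum_Icc_choose_mul_choose_pred {m n : ℕ} (hm : 1 ≤ m) (hmn : m ≤ n) :
    ∑ i ∈ Icc m n, (-1 : ℤ) ^ i * n.choose i * (i - 1).choose (m - 1) = (-1) ^ m := by
  obtain ⟨r, rfl⟩ := Nat.exists_eq_add_of_le' hm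
  obtain ⟨N, rfl⟩ := Nat.exists_eq_add_of_le' (hm.trans hmn)
  have hrN : r ≤ N := by omega
  rw [← map_add_right_Icc, sum_map]
  have extend : ∑ t ∈ Icc r N, (-1 : ℤ) ^ t * (N + 1).choose (t + 1) * t.choose r =
      ∑ t ∈ Finset.range (N + 1), (-1 : ℤ) ^ t * (N + 1).choose (t + 1) * t.choose r := by
    refine sum_subset (fun t ht ↦ by grind) fun t _ ht ↦ ?_
    rw [Nat.choose_eq_zero_of_lt (show t < r by grind), Nat.cast_zero, mul_zero]
  simp only [addRightEmbedding_apply, Nat.add_sub_cancel, pow_succ, mul_neg_one, neg_mul,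
    sum_neg_distrib, extend, Int.alternating_sum_range_choose_succ_mul_choose, if_pos hrN]

theorem alternating_binomial_sum_eq_one_general (k j : ℕ) (hj1 : 1 ≤ j) (hjk : j ≤ k) :
    -(∑ i ∈ Finset.Icc (2 * j - 1) (2 * k),
        (-1 : ℤ) ^ i * (Nat.choose (2 * k) i) * (Nat.choose (i - 1) (2 * j - 2))) = 1 := by
  have hodd : Odd (2 * j - 1) := ⟨j - 1, by omega⟩
  rw [show 2 * j - 2 = 2 * j - 1 - 1 by omega,
    Int.alternating_sum_Icc_choose_mul_choose_pred (by omega) (by omega), hodd.neg_one_pow, neg_neg]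

theorem alternating_binomial_sum_eq_one (k j : ℕ) (hk : 1 ≤ k) (hj1 : 1 ≤ j) (hjk : j ≤ k) :
    -(∑ i ∈ Finset.Icc (2 * j - 1) (2 * k),
        (-1 : ℤ) ^ i * (Nat.choose (2 * k) i) * (Nat.choose (i - 1) (2 * j - 2))) = 1 :=
  alternating_binomial_sum_eq_one_general k j hj1 hjk
end

section
/- Let X_1,…,X_n be i.i.d. standard normal random variables, D = ∑_{t=1}^n X_t², and Y_t = X_t/√D. Then for every 1 ≤ r ≤ n and all positive integers m_1,…,m_r with m_1+⋯+m_r = ℓ, one has E[Y_1^{2m_1} ⋯ Y_r^{2m_r}] = (Γ(n/2) / (2^ℓ · Γ(n/2 + ℓ))) · ∏_{j=1}^r (2m_j − 1)!!, where (2m−1)!! = 1·3·5⋯(2m−1). -/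
/-!
Since `Γ(ℓ) S^{-ℓ} = ∫₀^∞ t^{ℓ-1} e^{-tS} dt` for `S = ∑ X_t² > 0`, the moment
`E[∏ X_j^{2k_j} / S^ℓ]` is `Γ(ℓ)⁻¹ ∫₀^∞ t^{ℓ-1} E[∏ X_j^{2k_j} e^{-tS}] dt` by Tonelli. Under the
Laplace weight the expectation factorizes by independence into one-dimensional Gaussian integrals
`E[X^{2k} e^{-tX²}] = (2k-1)‼ (1+2t)^{-(k+1/2)}`, and what is left is the Beta-type integral
`∫₀^∞ t^{ℓ-1} (1+2t)^{-(ℓ+n/2)} dt = Γ(ℓ) Γ(n/2) / (2^ℓ Γ(ℓ+n/2))`.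
-/

open MeasureTheory ProbabilityTheory Filter

noncomputable section

variable {Ω : Type*}

open Real Set Function
open scoped Nat

theorem integral_integral_swap_of_nonneg {α β : Type*} [MeasurableSpace α]
    [MeasurableSpace β] {μ : Measure α} {ν : Measure β} [SFinite μ] [SFinite ν]
    {f : α → β → ℝ} (hf : AEStronglyMeasurable (uncurry f) (μ.prod ν))
    (hf0 : ∀ᵐ x ∂μ, ∀ᵐ y ∂ν, 0 ≤ f x y) (hfx : ∀ᵐ x ∂μ, Integrable (f x) ν)
    (hfi : Integrable (fun x ↦ ∫ y, f x y ∂ν) μ) :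
    ∫ x, ∫ y, f x y ∂ν ∂μ = ∫ y, ∫ x, f x y ∂μ ∂ν := by
  refine integral_integral_swap ((integrable_prod_iff hf).2 ⟨hfx, hfi.congr ?_⟩)
  filter_upwards [hf0] with x hx
  exact integral_congr_ae (hx.mono fun y hy ↦ (norm_of_nonneg hy).symm)

theorem integrableOn_rpow_mul_exp_neg_mul_Ioi {a r : ℝ} (ha : 0 < a) (hr : 0 < r) :
    IntegrableOn (fun t ↦ t ^ (a - 1) * exp (-(r * t))) (Ioi 0) :=
  Integrable.of_integral_ne_zero (by rw [integral_rpow_mul_exp_neg_mul_Ioi ha hr]; positivity)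

/- Both iterated integrals of `s^{a+c-1} e^{-s} t^{a-1} e^{-bst}` over the positive quadrant are
products of Gamma integrals. -/
theorem integral_rpow_mul_one_add_mul_rpow_neg {a c b : ℝ} (ha : 0 < a) (hc : 0 < c)
    (hb : 0 < b) :
    ∫ t in Ioi 0, t ^ (a - 1) * (1 + b * t) ^ (-(a + c)) =
      Gamma a * Gamma c / (b ^ a * Gamma (a + c)) := by
  set K : ℝ → ℝ → ℝ := fun s t ↦ s ^ (a + c - 1) * exp (-s) * (t ^ (a - 1) * exp (-(b * s * t)))
  have hK_t : ∀ s ∈ Ioi (0 : ℝ),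
      ∫ t in Ioi 0, K s t = Gamma a / b ^ a * (s ^ (c - 1) * exp (-(1 * s))) :=
    fun s (hs : 0 < s) ↦ by
      rw [integral_const_mul, integral_rpow_mul_exp_neg_mul_Ioi ha (by positivity), one_div,
        inv_rpow (by positivity), mul_rpow hb.le hs.le, one_mul,
        show a + c - 1 = (c - 1) + a by ring, rpow_add hs]
      field_simp
  have hK_s : ∀ t ∈ Ioi (0 : ℝ),
      ∫ s in Ioi 0, K s t = Gamma (a + c) * (t ^ (a - 1) * (1 + b * t) ^ (-(a + c))) :=
    fun t (ht : 0 < t) ↦ by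
      have hK : ∀ s, K s t = t ^ (a - 1) * (s ^ (a + c - 1) * exp (-((1 + b * t) * s))) :=
        fun s ↦ by
          rw [show -((1 + b * t) * s) = -s + -(b * s * t) by ring, exp_add]
          ring
      simp_rw [hK]
      rw [integral_const_mul, integral_rpow_mul_exp_neg_mul_Ioi (by positivity) (by positivity),
        one_div, inv_rpow (by positivity), ← rpow_neg (by positivity)]
      ring
  have hswap : ∫ s in Ioi 0, ∫ t in Ioi 0, K s t = ∫ t in Ioi 0, ∫ s in Ioi 0, K s t := by
    refine integral_integral_swap_of_nonneg ?_ ?_ ?_ ?_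
    · exact (by fun_prop : Measurable (uncurry K)).aestronglyMeasurable
    · filter_upwards [ae_restrict_mem measurableSet_Ioi] with s (hs : 0 < s)
      filter_upwards [ae_restrict_mem measurableSet_Ioi] with t (ht : 0 < t)
      positivity
    · filter_upwards [ae_restrict_mem measurableSet_Ioi] with s (hs : 0 < s)
      exact (integrableOn_rpow_mul_exp_neg_mul_Ioi ha (by positivity)).const_mul _
    · refine ((integrableOn_rpow_mul_exp_neg_mul_Ioi hc one_pos).const_mul
        (Gamma a / b ^ a)).congr ?_
      filter_upwards [ae_restrict_mem measurableSet_Ioi] with s hs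
      exact (hK_t s hs).symm
  rw [setIntegral_congr_fun measurableSet_Ioi hK_t, setIntegral_congr_fun measurableSet_Ioi hK_s,
    integral_const_mul, integral_const_mul, integral_rpow_mul_exp_neg_mul_Ioi hc one_pos,
    div_one, one_rpow, one_mul, div_mul_eq_mul_div, div_eq_iff (by positivity)] at hswap
  rw [eq_div_iff (by positivity), hswap]
  ring

theorem integral_even_pow_mul_exp_neg_mul_sq (k : ℕ) {b : ℝ} (hb : 0 < b) :
    ∫ x : ℝ, x ^ (2 * k) * exp (-(b * x ^ 2)) =
      b ^ (-(k + 1 / 2 : ℝ)) * Gamma (k + 1 / 2) := by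
  have heven : ∀ x : ℝ,
      |x| ^ (2 * k) * exp (-(b * |x| ^ 2)) = x ^ (2 * k) * exp (-(b * x ^ 2)) :=
    fun x ↦ by rw [pow_mul, sq_abs, ← pow_mul]
  calc ∫ x : ℝ, x ^ (2 * k) * exp (-(b * x ^ 2))
      = ∫ x : ℝ, |x| ^ (2 * k) * exp (-(b * |x| ^ 2)) := by simp only [heven]
    _ = 2 * ∫ x in Ioi (0 : ℝ), x ^ (2 * k) * exp (-(b * x ^ 2)) :=
        integral_comp_abs (f := fun x ↦ x ^ (2 * k) * exp (-(b * x ^ 2)))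
    _ = 2 * ∫ x in Ioi (0 : ℝ), x ^ ((2 * k : ℕ) : ℝ) * exp (-b * x ^ (2 : ℝ)) := by
        congr 1
        refine setIntegral_congr_fun measurableSet_Ioi fun x _ ↦ ?_
        rw [rpow_natCast, ← rpow_natCast x 2]
        norm_num
    _ = b ^ (-(k + 1 / 2 : ℝ)) * Gamma (k + 1 / 2) := by
        rw [integral_rpow_mul_exp_neg_mul_rpow two_pos
          (by linarith [(2 * k : ℕ).cast_nonneg (α := ℝ)]) hb]
        push_cast
        ring_nf

theorem integral_gaussianReal_even_pow_mul_exp_neg_mul_sq (k : ℕ) {t : ℝ}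
    (ht : 0 < 1 + 2 * t) :
    ∫ x, x ^ (2 * k) * exp (-(t * x ^ 2)) ∂gaussianReal 0 1 =
      (2 * k - 1)‼ * (1 + 2 * t) ^ (-(k + 1 / 2 : ℝ)) := by
  have hpdf : ∀ x : ℝ, gaussianPDFReal 0 1 x • (x ^ (2 * k) * exp (-(t * x ^ 2))) =
      (√(2 * π))⁻¹ * (x ^ (2 * k) * exp (-((1 + 2 * t) / 2 * x ^ 2))) := fun x ↦ by
    rw [gaussianPDFReal, smul_eq_mul,
      show -((1 + 2 * t) / 2 * x ^ 2) = -x ^ 2 / 2 + -(t * x ^ 2) by ring, exp_add]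
    norm_num
    ring
  rw [integral_gaussianReal_eq_integral_smul one_ne_zero]
  simp_rw [hpdf]
  rw [integral_const_mul, integral_even_pow_mul_exp_neg_mul_sq k (by linarith),
    Gamma_nat_add_half, div_rpow ht.le zero_le_two, rpow_neg zero_le_two, rpow_add zero_lt_two,
    rpow_natCast, ← sqrt_eq_rpow, sqrt_mul zero_le_two]
  field_simp

theorem Finset.prod_even_pow_le_sum_sq_pow {ι : Type*} (s : Finset ι) (x : ι → ℝ)
    (k : ι → ℕ) : ∏ i ∈ s, x i ^ (2 * k i) ≤ (∑ i ∈ s, x i ^ 2) ^ (∑ i ∈ s, k i) := by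
  rw [← Finset.prod_pow_eq_pow_sum]
  refine Finset.prod_le_prod (fun i _ ↦ by rw [pow_mul]; positivity) fun i hi ↦ ?_
  rw [pow_mul]
  exact pow_le_pow_left₀ (sq_nonneg _)
    (Finset.single_le_sum (f := fun i ↦ x i ^ 2) (fun i _ ↦ sq_nonneg _) hi) _

@[to_additive]
theorem Finset.prod_range_ite_lt_of_le {M : Type*} [CommMonoid M] {r n : ℕ} (h : r ≤ n)
    (m : ℕ → ℕ) (f : ℕ → ℕ → M) (hf : ∀ j, f j 0 = 1) :
    ∏ j ∈ range n, f j (if j < r then m j else 0) = ∏ j ∈ range r, f j (m j) := by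
  rw [← Finset.prod_range_mul_prod_Ico _ h, Finset.prod_eq_one (s := Ico r n) fun j hj ↦ by
    rw [if_neg (Finset.mem_Ico.1 hj).1.not_gt, hf], mul_one]
  exact Finset.prod_congr rfl fun j hj ↦ by rw [if_pos (Finset.mem_range.1 hj)]

theorem Gamma_mul_integral_mul_rpow_neg [MeasurableSpace Ω] {P : Measure Ω} [SFinite P]
    {N S : Ω → ℝ} {a : ℝ} (ha : 0 < a) (hN : Measurable N) (hS : Measurable S)
    (hN0 : ∀ ω, 0 ≤ N ω) (hS0 : ∀ᵐ ω ∂P, 0 < S ω)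
    (hint : Integrable (fun ω ↦ N ω * S ω ^ (-a)) P) :
    Gamma a * ∫ ω, N ω * S ω ^ (-a) ∂P =
      ∫ t in Ioi 0, t ^ (a - 1) * (∫ ω, N ω * exp (-(S ω * t)) ∂P) := by
  have hinner : ∀ ω, 0 < S ω →
      ∫ t in Ioi 0, N ω * (t ^ (a - 1) * exp (-(S ω * t))) = Gamma a * (N ω * S ω ^ (-a)) :=
    fun ω hω ↦ by
      rw [integral_const_mul, integral_rpow_mul_exp_neg_mul_Ioi ha hω, one_div,
        inv_rpow hω.le, ← rpow_neg hω.le]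
      ring
  calc Gamma a * ∫ ω, N ω * S ω ^ (-a) ∂P
      = ∫ ω, (∫ t in Ioi 0, N ω * (t ^ (a - 1) * exp (-(S ω * t)))) ∂P := by
        rw [← integral_const_mul]
        refine integral_congr_ae ?_
        filter_upwards [hS0] with ω hω using (hinner ω hω).symm
    _ = ∫ t in Ioi 0, ∫ ω, N ω * (t ^ (a - 1) * exp (-(S ω * t))) ∂P := by
        refine integral_integral_swap_of_nonneg ?_ ?_ ?_ ?_
        · exact (by fun_prop : Measurable (uncurry
            fun ω t ↦ N ω * (t ^ (a - 1) * exp (-(S ω * t))))).aestronglyMeasurable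
        · refine ae_of_all _ fun ω ↦ ?_
          filter_upwards [ae_restrict_mem measurableSet_Ioi] with t (ht : 0 < t)
          have := hN0 ω
          positivity
        · filter_upwards [hS0] with ω hω
          exact (integrableOn_rpow_mul_exp_neg_mul_Ioi ha hω).const_mul _
        · refine (hint.const_mul (Gamma a)).congr ?_
          filter_upwards [hS0] with ω hω using (hinner ω hω).symm
    _ = ∫ t in Ioi 0, t ^ (a - 1) * (∫ ω, N ω * exp (-(S ω * t)) ∂P) := by
        refine setIntegral_congr_fun measurableSet_Ioi fun t _ ↦ ?_
        rw [← integral_const_mul]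
        congr 1 with ω
        ring

theorem ae_sum_range_sq_pos [MeasurableSpace Ω] {P : Measure Ω} {X : ℕ → Ω → ℝ}
    (hX : Measurable (X 0)) (hgauss : P.map (X 0) = gaussianReal 0 1) {n : ℕ} (hn : 0 < n) :
    ∀ᵐ ω ∂P, 0 < ∑ j ∈ Finset.range n, X j ω ^ 2 := by
  have hX0 : ∀ᵐ ω ∂P, X 0 ω ≠ 0 := by
    refine ae_of_ae_map hX.aemeasurable (p := (· ≠ 0)) ?_
    rw [hgauss]
    exact (gaussianReal_absolutelyContinuous 0 one_ne_zero).ae_le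
      (compl_mem_ae_iff.2 (measure_singleton 0))
  filter_upwards [hX0] with ω hω
  calc 0 < X 0 ω ^ 2 := by positivity
    _ ≤ ∑ j ∈ Finset.range n, X j ω ^ 2 :=
        Finset.single_le_sum (f := fun j ↦ X j ω ^ 2) (fun j _ ↦ sq_nonneg _)
          (Finset.mem_range.2 hn)

theorem integral_prod_pow_mul_exp_neg_sum_sq_mul [MeasurableSpace Ω] {P : Measure Ω}
    {X : ℕ → Ω → ℝ} (hmeas : ∀ j, Measurable (X j)) (hindep : iIndepFun X P)
    (hgauss : ∀ j, P.map (X j) = gaussianReal 0 1) (n : ℕ) (k : ℕ → ℕ) {t : ℝ}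
    (ht : 0 < 1 + 2 * t) :
    ∫ ω, (∏ j ∈ Finset.range n, X j ω ^ (2 * k j)) *
        exp (-((∑ j ∈ Finset.range n, X j ω ^ 2) * t)) ∂P =
      (∏ j ∈ Finset.range n, ((2 * k j - 1)‼ : ℝ)) *
        (1 + 2 * t) ^ (-(∑ j ∈ Finset.range n, k j + n / 2 : ℝ)) := by
  set g : ℕ → ℝ → ℝ := fun j x ↦ x ^ (2 * k j) * exp (-(t * x ^ 2))
  have hfactor : ∀ ω, (∏ j ∈ Finset.range n, X j ω ^ (2 * k j)) *
      exp (-((∑ j ∈ Finset.range n, X j ω ^ 2) * t)) = ∏ i : Fin n, g i (X i ω) := fun ω ↦ by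
    rw [Fin.prod_univ_eq_prod_range (fun j ↦ g j (X j ω)), Finset.sum_mul,
      ← Finset.sum_neg_distrib, exp_sum, ← Finset.prod_mul_distrib]
    simp only [g, mul_comm t]
  have hmoment : ∀ j, ∫ ω, g j (X j ω) ∂P =
      (2 * k j - 1)‼ * (1 + 2 * t) ^ (-(k j + 1 / 2 : ℝ)) := fun j ↦ by
    rw [← integral_map (hmeas j).aemeasurable (by fun_prop), hgauss j,
      integral_gaussianReal_even_pow_mul_exp_neg_mul_sq (k j) ht]
  simp_rw [hfactor]
  rw [(hindep.precomp Fin.val_injective).integral_fun_prod_comp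
    (fun i ↦ (hmeas i).aemeasurable) (fun i ↦ by fun_prop),
    Fin.prod_univ_eq_prod_range (fun j ↦ ∫ ω, g j (X j ω) ∂P)]
  simp_rw [hmoment]
  rw [Finset.prod_mul_distrib, ← rpow_sum_of_pos ht]
  congr 2
  push_cast
  rw [Finset.sum_neg_distrib, Finset.sum_add_distrib]
  simp only [Finset.sum_const, Finset.card_range, nsmul_eq_mul]
  ring

theorem integral_prod_range_Yvec_pow [MeasurableSpace Ω] {P : Measure Ω}
    [IsProbabilityMeasure P] {X : ℕ → Ω → ℝ} (hmeas : ∀ j, Measurable (X j))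
    (hindep : iIndepFun X P) (hgauss : ∀ j, P.map (X j) = gaussianReal 0 1) (n : ℕ)
    (k : ℕ → ℕ) {ℓ : ℕ} (hk : ∑ j ∈ Finset.range n, k j = ℓ) (hℓ : 0 < ℓ) :
    ∫ ω, ∏ j ∈ Finset.range n, Yvec X n j ω ^ (2 * k j) ∂P =
      Gamma (n / 2) / (2 ^ ℓ * Gamma (n / 2 + ℓ)) *
        ∏ j ∈ Finset.range n, ((2 * k j - 1)‼ : ℝ) := by
  set S : Ω → ℝ := fun ω ↦ ∑ j ∈ Finset.range n, X j ω ^ 2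
  set N : Ω → ℝ := fun ω ↦ ∏ j ∈ Finset.range n, X j ω ^ (2 * k j)
  set C : ℝ := ∏ j ∈ Finset.range n, ((2 * k j - 1)‼ : ℝ)
  have hn : 0 < n := Nat.pos_of_ne_zero fun h ↦ by simp [h] at hk; omega
  have hS0 : ∀ᵐ ω ∂P, 0 < S ω := ae_sum_range_sq_pos (hmeas 0) (hgauss 0) hn
  have hN0 : ∀ ω, 0 ≤ N ω := fun ω ↦
    Finset.prod_nonneg fun j _ ↦ by rw [pow_mul]; positivity
  have hY : ∀ ω, 0 < S ω →
      ∏ j ∈ Finset.range n, Yvec X n j ω ^ (2 * k j) = N ω * S ω ^ (-(ℓ : ℝ)) :=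
    fun ω hω ↦ by
      have hsqrt : √(∑ j ∈ Finset.range n, X j ω ^ 2) ^ 2 = S ω := sq_sqrt hω.le
      simp only [Yvec, div_pow, Finset.prod_div_distrib, pow_mul, hsqrt]
      rw [Finset.prod_pow_eq_pow_sum, hk, rpow_neg hω.le, rpow_natCast, div_eq_mul_inv]
      simp only [N, pow_mul]
  have hint : Integrable (fun ω ↦ N ω * S ω ^ (-(ℓ : ℝ))) P := by
    refine Integrable.mono' (integrable_const 1) (by fun_prop) ?_
    filter_upwards [hS0] with ω hω
    rw [norm_of_nonneg (by have := hN0 ω; positivity), rpow_neg hω.le, rpow_natCast,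
      ← div_eq_mul_inv, div_le_one (by positivity), ← hk]
    exact Finset.prod_even_pow_le_sum_sq_pow _ _ _
  have hℓ' : (0 : ℝ) < ℓ := by exact_mod_cast hℓ
  have hΓ : Gamma ℓ ≠ 0 := (Gamma_pos_of_pos hℓ').ne'
  calc ∫ ω, ∏ j ∈ Finset.range n, Yvec X n j ω ^ (2 * k j) ∂P
      = (Gamma ℓ)⁻¹ * (Gamma ℓ * ∫ ω, N ω * S ω ^ (-(ℓ : ℝ)) ∂P) := by
        rw [inv_mul_cancel_left₀ hΓ]
        exact integral_congr_ae (hS0.mono hY)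
    _ = (Gamma ℓ)⁻¹ * (C * ∫ t in Ioi 0, t ^ ((ℓ : ℝ) - 1) * (1 + 2 * t) ^ (-(ℓ + n / 2 : ℝ))) := by
        rw [Gamma_mul_integral_mul_rpow_neg hℓ' (by fun_prop) (by fun_prop) hN0 hS0 hint,
          ← integral_const_mul (μ := volume.restrict (Ioi 0)) C]
        congr 1
        refine setIntegral_congr_fun measurableSet_Ioi fun t (ht : 0 < t) ↦ ?_
        rw [integral_prod_pow_mul_exp_neg_sum_sq_mul hmeas hindep hgauss n k (by linarith), hk]
        ring
    _ = Gamma (n / 2) / (2 ^ ℓ * Gamma (n / 2 + ℓ)) * C := by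
        rw [integral_rpow_mul_one_add_mul_rpow_neg hℓ' (by positivity) two_pos, rpow_natCast,
          add_comm (ℓ : ℝ)]
        field_simp

theorem gaussian_self_normalized_moments
    [MeasurableSpace Ω] (P : Measure Ω) [IsProbabilityMeasure P]
    (X : ℕ → Ω → ℝ)
    (hmeas : ∀ t, Measurable (X t))
    (hindep : iIndepFun X P)
    (hgauss : ∀ t, Measure.map (X t) P = gaussianReal 0 1)
    (n r ℓ : ℕ) (hr1 : 1 ≤ r) (hrn : r ≤ n)
    (m : ℕ → ℕ) (hm : ∀ j < r, 1 ≤ m j) (hsum : (∑ j ∈ Finset.range r, m j) = ℓ) :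
    ∫ ω, ∏ j ∈ Finset.range r, (Yvec X n j ω) ^ (2 * m j) ∂P =
      (Real.Gamma ((n : ℝ) / 2) / (2 ^ ℓ * Real.Gamma ((n : ℝ) / 2 + ℓ))) *
        ∏ j ∈ Finset.range r, ((2 * m j - 1).doubleFactorial : ℝ) := by
  set k : ℕ → ℕ := fun j ↦ if j < r then m j else 0
  have hℓ : 0 < ℓ := hsum ▸ Finset.sum_pos (fun j hj ↦ hm j (Finset.mem_range.1 hj))
    (Finset.nonempty_range_iff.2 (by omega))
  have hk : ∑ j ∈ Finset.range n, k j = ℓ := by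
    rw [Finset.sum_range_ite_lt_of_le hrn m (fun _ i ↦ i) fun _ ↦ rfl, hsum]
  have hY : ∀ ω, ∏ j ∈ Finset.range r, Yvec X n j ω ^ (2 * m j) =
      ∏ j ∈ Finset.range n, Yvec X n j ω ^ (2 * k j) := fun ω ↦
    (Finset.prod_range_ite_lt_of_le hrn m (fun j i ↦ Yvec X n j ω ^ (2 * i)) fun _ ↦ rfl).symm
  have hC : ∏ j ∈ Finset.range r, ((2 * m j - 1)‼ : ℝ) =
      ∏ j ∈ Finset.range n, ((2 * k j - 1)‼ : ℝ) :=
    (Finset.prod_range_ite_lt_of_le hrn m (fun _ i ↦ ((2 * i - 1)‼ : ℝ)) fun _ ↦ by simp).symm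
  simp_rw [hY, hC]
  exact integral_prod_range_Yvec_pow hmeas hindep hgauss n k hk hℓ

end
end

section
/- Let X be a real p×n matrix whose rows have positive squared norms D_i = ∑_{t=1}^n X_{it}² > 0, let F = diag(1/D_1,…,1/D_p), and let R = F^{1/2} X X' F^{1/2} be the associated correlation matrix. Let λ_(1) ≥ ⋯ ≥ λ_(p) be the ordered eigenvalues of X X' and μ_(1) ≥ ⋯ ≥ μ_(p) the ordered eigenvalues of R. Then max_{i=1,…,p} |μ_(i) − n^{-1}λ_(i)| ≤ n^{-1}·λ_(1) · max_{i=1,…,p} |n/D_i − 1|. -/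
/-!
Write `S = X X'` and `G = diag(D_j^{-1/2})`, so that `R = G S G`. For a congruence by an
invertible diagonal `G`, a Courant–Fischer dimension count (a nonzero `v` in the span of the top
`i` eigenvectors of `G S G` with `G v` in the span of the bottom `p - i + 1` eigenvectors of `S`,
and symmetrically) squeezes the `i`-th eigenvalue of `G S G` between `min_j g_j² · λ_i` and
`max_j g_j² · λ_i` (Ostrowski). Here `g_j² = 1/D_j` lies within `ε/n` of `1/n`, where
`ε = max_j |n/D_j - 1|`, so `|μ_i - λ_i/n| ≤ (ε/n) λ_i ≤ (ε/n) λ_1`.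
-/

open Finset Matrix

open scoped RealInnerProductSpace

theorem eq_of_antitone_of_multiset_map_eq {α : Type*} [LinearOrder α] {p : ℕ}
    {f g : Fin p → α} (hf : Antitone f) (hg : Antitone g)
    (h : univ.val.map f = univ.val.map g) : f = g := by
  rw [Fin.univ_val_map, Fin.univ_val_map] at h
  have sorted : ∀ {f : Fin p → α}, Antitone f → (List.ofFn f).Pairwise (· ≥ ·) :=
    fun hf => List.pairwise_ofFn.2 fun _ _ hab => hf hab.le
  exact List.ofFn_injective ((Quotient.exact h).eq_of_pairwise' (sorted hf) (sorted hg))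

theorem Matrix.IsHermitian.exists_orthonormalBasis_of_antitone {p : ℕ}
    {M : Matrix (Fin p) (Fin p) ℝ} (hM : M.IsHermitian) {c : Fin p → ℝ} (hc : Antitone c)
    (hcM : univ.val.map c = univ.val.map hM.eigenvalues) :
    ∃ u : OrthonormalBasis (Fin p) ℝ (EuclideanSpace ℝ (Fin p)),
      ∀ j, M.toEuclideanLin (u j) = c j • u j := by
  let σ := Tuple.sort (-hM.eigenvalues)
  have hσ : Antitone (hM.eigenvalues ∘ σ) := fun a b hab => by
    simpa using Tuple.monotone_sort (-hM.eigenvalues) hab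
  have hc_eq : c = hM.eigenvalues ∘ σ := by
    refine eq_of_antitone_of_multiset_map_eq hc hσ (hcM.trans ?_)
    rw [← Multiset.map_map, Multiset.map_univ_val_equiv]
  refine ⟨hM.eigenvectorBasis.reindex σ.symm, fun j => ?_⟩
  rw [OrthonormalBasis.reindex_apply, Equiv.symm_symm, toLpLin_apply, hc_eq]
  ext k
  simpa using congrFun (hM.mulVec_eigenvectorBasis (σ j)) k

theorem Module.Basis.finrank_span_image {K E ι : Type*} [Field K] [AddCommGroup E] [Module K E]
    (b : Basis ι K E) (s : Finset ι) : Module.finrank K (Submodule.span K (b '' s)) = s.card := by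
  rw [Set.image_eq_range]
  exact (finrank_span_eq_card (b.linearIndependent.comp _ Subtype.val_injective)).trans
    (Fintype.card_coe s)

theorem Module.Basis.exists_ne_zero_mem_span_image_apply_mem_span_image {K E ι κ : Type*}
    [Field K] [AddCommGroup E] [Module K E] [FiniteDimensional K E] (u : Basis ι K E)
    (w : Basis κ K E) (L : E ≃ₗ[K] E) (s : Finset ι) (t : Finset κ)
    (hst : Module.finrank K E < s.card + t.card) :
    ∃ v ≠ 0, v ∈ Submodule.span K (u '' s) ∧ L v ∈ Submodule.span K (w '' t) := by
  let V := Submodule.span K (u '' s)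
  let W := Submodule.span K (w.map L.symm '' t)
  have hVW : V ⊓ W ≠ ⊥ := by
    rw [Ne, ← Submodule.finrank_eq_zero]
    have := Submodule.finrank_sup_add_finrank_inf_eq V W
    have := Submodule.finrank_le (V ⊔ W)
    rw [u.finrank_span_image, (w.map L.symm).finrank_span_image] at *
    omega
  obtain ⟨v, ⟨hvV, hvW⟩, hv⟩ := Submodule.exists_mem_ne_zero_of_ne_bot hVW
  refine ⟨v, hv, hvV, ?_⟩
  simp only [W] at hvW
  rwa [SetLike.mem_coe, Basis.coe_map, Set.image_comp, ← LinearEquiv.coe_coe,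
    ← Submodule.map_span, Submodule.mem_map_equiv, LinearEquiv.symm_symm] at hvW

namespace OrthonormalBasis

variable {ι E : Type*} [Fintype ι] [NormedAddCommGroup E] [InnerProductSpace ℝ E]
  (u : OrthonormalBasis ι ℝ E) {T : E →ₗ[ℝ] E} {c : ι → ℝ}

theorem inner_apply_self_eq_sum (hT : ∀ j, T (u j) = c j • u j) (v : E) :
    ⟪v, T v⟫ = ∑ j, c j * ⟪u j, v⟫ ^ 2 := by
  have hTv : T v = ∑ j, (c j * ⟪u j, v⟫) • u j := by
    conv_lhs => rw [← u.sum_repr' v]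
    simp only [map_sum, map_smul, hT, smul_smul, mul_comm]
  rw [hTv, inner_sum]
  exact sum_congr rfl fun j _ => by rw [real_inner_smul_right, real_inner_comm]; ring

theorem inner_eq_zero_of_mem_span_image {s : Set ι} {v : E}
    (hv : v ∈ Submodule.span ℝ (u '' s)) {j : ι} (hj : j ∉ s) : ⟪u j, v⟫ = 0 := by
  refine Submodule.mem_orthogonal_singleton_iff_inner_right.1 (Submodule.span_le.2 ?_ hv)
  rintro _ ⟨k, hk, rfl⟩
  exact Submodule.mem_orthogonal_singleton_iff_inner_right.2
    (u.orthonormal.2 fun hjk => hj (hjk ▸ hk))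

theorem mul_norm_sq_le_inner_apply_self (hT : ∀ j, T (u j) = c j • u j) {s : Set ι} {r : ℝ}
    (hr : ∀ j ∈ s, r ≤ c j) {v : E} (hv : v ∈ Submodule.span ℝ (u '' s)) :
    r * ‖v‖ ^ 2 ≤ ⟪v, T v⟫ := by
  rw [u.inner_apply_self_eq_sum hT, ← u.sum_sq_inner_right, mul_sum]
  refine sum_le_sum fun j _ => ?_
  by_cases hj : j ∈ s
  · exact mul_le_mul_of_nonneg_right (hr j hj) (sq_nonneg _)
  · simp [u.inner_eq_zero_of_mem_span_image hv hj]

theorem inner_apply_self_le_mul_norm_sq (hT : ∀ j, T (u j) = c j • u j) {s : Set ι} {r : ℝ}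
    (hr : ∀ j ∈ s, c j ≤ r) {v : E} (hv : v ∈ Submodule.span ℝ (u '' s)) :
    ⟪v, T v⟫ ≤ r * ‖v‖ ^ 2 := by
  rw [u.inner_apply_self_eq_sum hT, ← u.sum_sq_inner_right, mul_sum]
  refine sum_le_sum fun j _ => ?_
  by_cases hj : j ∈ s
  · exact mul_le_mul_of_nonneg_right (hr j hj) (sq_nonneg _)
  · simp [u.inner_eq_zero_of_mem_span_image hv hj]

end OrthonormalBasis

theorem OrthonormalBasis.exists_ne_zero_mem_span_image_apply_mem_span_image {E : Type*}
    [NormedAddCommGroup E] [InnerProductSpace ℝ E] {p : ℕ} (u w : OrthonormalBasis (Fin p) ℝ E)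
    (L : E ≃ₗ[ℝ] E) (s t : Finset (Fin p)) (hst : p < s.card + t.card) :
    ∃ v ≠ 0, v ∈ Submodule.span ℝ (u '' s) ∧ L v ∈ Submodule.span ℝ (w '' t) := by
  have := u.toBasis.finiteDimensional_of_finite
  simpa using u.toBasis.exists_ne_zero_mem_span_image_apply_mem_span_image w.toBasis L s t
    (by simpa [Module.finrank_eq_card_basis u.toBasis] using hst)

section EigenvalueComparison

variable {E : Type*} [NormedAddCommGroup E] [InnerProductSpace ℝ E] {p : ℕ}
  {u w : OrthonormalBasis (Fin p) ℝ E} {T S : E →ₗ[ℝ] E} {mu lam : Fin p → ℝ} {L : E ≃ₗ[ℝ] E}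

theorem eigenvalue_le_mul_of_inner_apply_self_eq (hmu : Antitone mu) (hlam : Antitone lam)
    (hu : ∀ j, T (u j) = mu j • u j) (hw : ∀ j, S (w j) = lam j • w j)
    (hTS : ∀ x, ⟪x, T x⟫ = ⟪L x, S (L x)⟫) {b : ℝ} (hb : ∀ x, ‖L x‖ ^ 2 ≤ b * ‖x‖ ^ 2)
    {i : Fin p} (hi : 0 ≤ lam i) : mu i ≤ b * lam i := by
  obtain ⟨v, hv0, hvu, hvw⟩ := u.exists_ne_zero_mem_span_image_apply_mem_span_image w L
    (Iic i) (Ici i) (by rw [Fin.card_Iic, Fin.card_Ici]; omega)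
  refine le_of_mul_le_mul_right ?_ (pow_pos (norm_pos_iff.2 hv0) 2)
  calc mu i * ‖v‖ ^ 2 ≤ ⟪v, T v⟫ :=
        u.mul_norm_sq_le_inner_apply_self hu (fun j hj => hmu (mem_Iic.1 hj)) hvu
    _ = ⟪L v, S (L v)⟫ := hTS v
    _ ≤ lam i * ‖L v‖ ^ 2 :=
        w.inner_apply_self_le_mul_norm_sq hw (fun j hj => hlam (mem_Ici.1 hj)) hvw
    _ ≤ lam i * (b * ‖v‖ ^ 2) := mul_le_mul_of_nonneg_left (hb v) hi
    _ = b * lam i * ‖v‖ ^ 2 := by ring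

theorem mul_eigenvalue_le_of_inner_apply_self_eq (hmu : Antitone mu) (hlam : Antitone lam)
    (hu : ∀ j, T (u j) = mu j • u j) (hw : ∀ j, S (w j) = lam j • w j)
    (hTS : ∀ x, ⟪x, T x⟫ = ⟪L x, S (L x)⟫) {a : ℝ} (ha : ∀ x, a * ‖x‖ ^ 2 ≤ ‖L x‖ ^ 2)
    {i : Fin p} (hi : 0 ≤ lam i) : a * lam i ≤ mu i := by
  obtain ⟨v, hv0, hvu, hvw⟩ := u.exists_ne_zero_mem_span_image_apply_mem_span_image w L
    (Ici i) (Iic i) (by rw [Fin.card_Iic, Fin.card_Ici]; omega)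
  refine le_of_mul_le_mul_right ?_ (pow_pos (norm_pos_iff.2 hv0) 2)
  calc a * lam i * ‖v‖ ^ 2 = lam i * (a * ‖v‖ ^ 2) := by ring
    _ ≤ lam i * ‖L v‖ ^ 2 := mul_le_mul_of_nonneg_left (ha v) hi
    _ ≤ ⟪L v, S (L v)⟫ :=
        w.mul_norm_sq_le_inner_apply_self hw (fun j hj => hlam (mem_Iic.1 hj)) hvw
    _ = ⟪v, T v⟫ := (hTS v).symm
    _ ≤ mu i * ‖v‖ ^ 2 :=
        u.inner_apply_self_le_mul_norm_sq hu (fun j hj => hmu (mem_Ici.1 hj)) hvu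

end EigenvalueComparison

namespace Matrix

variable {𝕜 m n : Type*} [RCLike 𝕜] [Fintype m] [Fintype n] [DecidableEq m] [DecidableEq n]

theorem inner_toEuclideanLin_conjTranspose_mul_mul_self (A : Matrix m n 𝕜) (S : Matrix m m 𝕜)
    (x : EuclideanSpace 𝕜 n) :
    inner 𝕜 x ((Aᴴ * S * A).toEuclideanLin x) =
      inner 𝕜 (A.toEuclideanLin x) (S.toEuclideanLin (A.toEuclideanLin x)) := by
  rw [toLpLin_mul_same, toLpLin_mul_same, LinearMap.comp_apply, LinearMap.comp_apply,
    toEuclideanLin_conjTranspose_eq_adjoint, LinearMap.adjoint_inner_right]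

theorem norm_sq_toEuclideanLin_diagonal_le {d : n → ℝ} {b : ℝ} (hd : ∀ j, d j ^ 2 ≤ b)
    (x : EuclideanSpace ℝ n) : ‖(diagonal d).toEuclideanLin x‖ ^ 2 ≤ b * ‖x‖ ^ 2 := by
  simp only [EuclideanSpace.norm_sq_eq, toLpLin_apply, mulVec_diagonal, mul_sum,
    Real.norm_eq_abs, sq_abs, mul_pow]
  exact sum_le_sum fun j _ => mul_le_mul_of_nonneg_right (hd j) (sq_nonneg _)

theorem mul_norm_sq_le_norm_sq_toEuclideanLin_diagonal {d : n → ℝ} {a : ℝ}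
    (hd : ∀ j, a ≤ d j ^ 2) (x : EuclideanSpace ℝ n) :
    a * ‖x‖ ^ 2 ≤ ‖(diagonal d).toEuclideanLin x‖ ^ 2 := by
  simp only [EuclideanSpace.norm_sq_eq, toLpLin_apply, mulVec_diagonal, mul_sum,
    Real.norm_eq_abs, sq_abs, mul_pow]
  exact sum_le_sum fun j _ => mul_le_mul_of_nonneg_right (hd j) (sq_nonneg _)

theorem abs_eigenvalue_sub_mul_le_of_diagonal_congr {p : ℕ}
    {S : Matrix (Fin p) (Fin p) ℝ} {d : Fin p → ℝ} (hd0 : ∀ j, d j ≠ 0) {c δ : ℝ}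
    (hd : ∀ j, |d j ^ 2 - c| ≤ δ) {u w : OrthonormalBasis (Fin p) ℝ (EuclideanSpace ℝ (Fin p))}
    {mu lam : Fin p → ℝ} (hmu : Antitone mu) (hlam : Antitone lam)
    (hu : ∀ j, (diagonal d * S * diagonal d).toEuclideanLin (u j) = mu j • u j)
    (hw : ∀ j, S.toEuclideanLin (w j) = lam j • w j) {i : Fin p} (hi : 0 ≤ lam i) :
    |mu i - c * lam i| ≤ δ * lam i := by
  have hinj : Function.Injective (diagonal d).toEuclideanLin := fun x y hxy => by
    ext j
    simpa [toLpLin_apply, mulVec_diagonal, hd0 j] using congrArg (· j) hxy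
  let L := LinearEquiv.ofInjectiveEndo _ hinj
  have hTS (x : EuclideanSpace ℝ (Fin p)) :
      ⟪x, (diagonal d * S * diagonal d).toEuclideanLin x⟫ = ⟪L x, S.toEuclideanLin (L x)⟫ := by
    have hG : (diagonal d)ᴴ = diagonal d := by simp
    simpa only [hG, L, LinearEquiv.coe_ofInjectiveEndo] using
      inner_toEuclideanLin_conjTranspose_mul_mul_self (diagonal d) S x
  have hd_le (j : Fin p) : d j ^ 2 ≤ c + δ := by linarith [abs_le.1 (hd j)]
  have hd_ge (j : Fin p) : c - δ ≤ d j ^ 2 := by linarith [abs_le.1 (hd j)]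
  have hup := eigenvalue_le_mul_of_inner_apply_self_eq hmu hlam hu hw hTS
    (norm_sq_toEuclideanLin_diagonal_le hd_le) hi
  have hlo := mul_eigenvalue_le_of_inner_apply_self_eq hmu hlam hu hw hTS
    (mul_norm_sq_le_norm_sq_toEuclideanLin_diagonal hd_ge) hi
  rw [abs_sub_le_iff]
  constructor <;> linarith

end Matrix

theorem corr_cov_eigenvalue_comparison
    (p n : ℕ) (hp : 0 < p)
    (X : Matrix (Fin p) (Fin n) ℝ)
    (D : Fin p → ℝ) (hD : ∀ i, D i = ∑ t, X i t ^ 2) (hDpos : ∀ i, 0 < D i)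
    (R : Matrix (Fin p) (Fin p) ℝ)
    (hR : R = Matrix.diagonal (fun i => Real.sqrt (1 / D i)) * (X * Xᵀ) *
        Matrix.diagonal (fun i => Real.sqrt (1 / D i)))
    (hXXT : (X * Xᵀ).IsHermitian) (hRH : R.IsHermitian)
    (lam mu : Fin p → ℝ) (hlam_anti : Antitone lam) (hmu_anti : Antitone mu)
    (hlam : Multiset.map lam Finset.univ.val = Multiset.map hXXT.eigenvalues Finset.univ.val)
    (hmu : Multiset.map mu Finset.univ.val = Multiset.map hRH.eigenvalues Finset.univ.val) :
    ∀ i, |mu i - lam i / n| ≤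
      (1 / (n : ℝ)) * lam ⟨0, hp⟩ * ⨆ j, |(n : ℝ) / D j - 1| := by
  intro i
  have hn : (0 : ℝ) < n := by
    rcases Nat.eq_zero_or_pos n with rfl | hn
    · simpa [hD] using hDpos ⟨0, hp⟩
    · exact_mod_cast hn
  set ε := ⨆ j, |(n : ℝ) / D j - 1|
  have hε (j : Fin p) : |(n : ℝ) / D j - 1| ≤ ε :=
    le_ciSup (f := fun j => |(n : ℝ) / D j - 1|) (Set.finite_range _).bddAbove j
  have hd (j : Fin p) : |√(1 / D j) ^ 2 - 1 / n| ≤ ε / n := by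
    have hDj := hDpos j
    rw [Real.sq_sqrt (by positivity), show 1 / D j - 1 / n = ((n : ℝ) / D j - 1) / n by
      field_simp, abs_div, abs_of_pos hn]
    exact div_le_div_of_nonneg_right (hε j) hn.le
  have hlam_nonneg : 0 ≤ lam i := by
    obtain ⟨j, -, hj⟩ := Multiset.mem_map.1 (hlam ▸ Multiset.mem_map_of_mem lam (mem_univ i))
    have hS := posSemidef_self_mul_conjTranspose X
    rw [conjTranspose_eq_transpose_of_trivial] at hS
    exact hj ▸ hS.eigenvalues_nonneg j
  obtain ⟨w, hw⟩ := hXXT.exists_orthonormalBasis_of_antitone hlam_anti hlam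
  obtain ⟨u, hu⟩ := hRH.exists_orthonormalBasis_of_antitone hmu_anti hmu
  rw [hR] at hu
  calc |mu i - lam i / n| = |mu i - 1 / n * lam i| := by ring_nf
    _ ≤ ε / n * lam i := abs_eigenvalue_sub_mul_le_of_diagonal_congr
        (fun j => (Real.sqrt_pos.2 (one_div_pos.2 (hDpos j))).ne') hd hmu_anti hlam_anti hu hw
        hlam_nonneg
    _ ≤ ε / n * lam ⟨0, hp⟩ := mul_le_mul_of_nonneg_left (hlam_anti (Nat.zero_le i.val))
        (div_nonneg ((abs_nonneg _).trans (hε ⟨0, hp⟩)) hn.le)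
    _ = 1 / n * lam ⟨0, hp⟩ * ε := by ring
end
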